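/- arXiv:quant-ph/0309036 — 9 statements merged into one kernel-verified Lean document; each statement's English description precedes it below -/
import Mathlib

section
/- For any one-bit fingerprinting scheme P on a finite set S, there exist functions x : S → ℝ, y : S → ℝ and d : [0,1] → ℝ such that for all α, β ∈ S and all ε ∈ [0,1]: x(α)·y(β) ≥ d(ε) if and only if P₊(α,β) ≥ 1 − ε. -/
/-!
Writing `P₊(α,β) = r₀₀ + b p(α) + c q(β) + e p(α) q(β)`, the acceptance probability is a bilinear
function of `p(α)` and `q(β)`. If `e ≠ 0` it equals `(e p(α) + c)(q(β) + b/e) + r₀₀ - bc/e`, a product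
plus a constant; if `e = 0` it is a sum, which `exp` turns into a product. Either way the threshold
condition `P₊ ≥ 1 - ε` becomes a threshold condition on a product `x(α) y(β)`.
-/

/-- The acceptance probability of a one-bit fingerprinting scheme. -/
noncomputable def onebitPplus {S : Type*} (p q : S → ℝ) (r00 r01 r10 r11 : ℝ)
    (α β : S) : ℝ :=
  (1 - p α) * (1 - q β) * r00 + (1 - p α) * q β * r01 +
    p α * (1 - q β) * r10 + p α * q β * r11

def HasSeparatingParameters {S T : Type*} (F : S → T → ℝ) : Prop :=
  ∃ (x : S → ℝ) (y : T → ℝ) (d : ℝ → ℝ), ∀ α β t, d t ≤ x α * y β ↔ t ≤ F α β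

section HasSeparatingParameters

variable {S T : Type*}

theorem hasSeparatingParameters_mul (u : S → ℝ) (v : T → ℝ) :
    HasSeparatingParameters fun α β => u α * v β :=
  ⟨u, v, id, fun _ _ _ => Iff.rfl⟩

theorem hasSeparatingParameters_add (u : S → ℝ) (v : T → ℝ) :
    HasSeparatingParameters fun α β => u α + v β :=
  ⟨fun α => Real.exp (u α), fun β => Real.exp (v β), Real.exp, fun α β t => by
    rw [← Real.exp_add, Real.exp_le_exp]⟩

theorem HasSeparatingParameters.add_const {F : S → T → ℝ} (hF : HasSeparatingParameters F)
    (a : ℝ) : HasSeparatingParameters fun α β => F α β + a := by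
  obtain ⟨x, y, d, h⟩ := hF
  exact ⟨x, y, fun t => d (t - a), fun α β t => by rw [h, sub_le_iff_le_add]⟩

theorem hasSeparatingParameters_bilinear (u : S → ℝ) (v : T → ℝ) (a b c e : ℝ) :
    HasSeparatingParameters fun α β => a + b * u α + c * v β + e * u α * v β := by
  by_cases he : e = 0
  · subst he
    convert (hasSeparatingParameters_add (fun α => b * u α) (fun β => c * v β)).add_const a
      using 3
    ring
  · convert (hasSeparatingParameters_mul (fun α => e * u α + c) (fun β => v β + b / e)).add_const
      (a - c * b / e) using 3
    field_simp
    ring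

end HasSeparatingParameters

theorem onebitPplus_eq_bilinear {S : Type*} (p q : S → ℝ) (r00 r01 r10 r11 : ℝ) (α β : S) :
    onebitPplus p q r00 r01 r10 r11 α β =
      r00 + (r10 - r00) * p α + (r01 - r00) * q β + (r11 - r10 - r01 + r00) * p α * q β := by
  unfold onebitPplus
  ring

theorem onebit_separating_parameters_general {S : Type*}
    (p q : S → ℝ) (r00 r01 r10 r11 : ℝ) :
    ∃ (x y : S → ℝ) (d : ℝ → ℝ),
      ∀ α β : S, ∀ ε ∈ Set.Icc (0 : ℝ) 1,
        (x α * y β ≥ d ε ↔ onebitPplus p q r00 r01 r10 r11 α β ≥ 1 - ε) := by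
  obtain ⟨x, y, d, h⟩ := hasSeparatingParameters_bilinear p q r00 (r10 - r00) (r01 - r00)
    (r11 - r10 - r01 + r00)
  refine ⟨x, y, fun ε => d (1 - ε), fun α β ε _ => ?_⟩
  rw [onebitPplus_eq_bilinear]
  exact h α β (1 - ε)

/-- For any one-bit fingerprinting scheme `P` on a finite set `S`,
there exist `x y : S → ℝ` and `d : [0,1] → ℝ` such that for all `α β ∈ S` and
`ε ∈ [0,1]`, `x α * y β ≥ d ε ↔ P₊(α,β) ≥ 1 - ε`. -/
theorem onebit_separating_parameters {S : Type*} [Fintype S]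
    (p q : S → ℝ) (r00 r01 r10 r11 : ℝ)
    (hp : ∀ σ, p σ ∈ Set.Icc (0 : ℝ) 1) (hq : ∀ σ, q σ ∈ Set.Icc (0 : ℝ) 1)
    (hr00 : r00 ∈ Set.Icc (0 : ℝ) 1) (hr01 : r01 ∈ Set.Icc (0 : ℝ) 1)
    (hr10 : r10 ∈ Set.Icc (0 : ℝ) 1) (hr11 : r11 ∈ Set.Icc (0 : ℝ) 1) :
    ∃ (x y : S → ℝ) (d : ℝ → ℝ),
      ∀ α β : S, ∀ ε ∈ Set.Icc (0 : ℝ) 1,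
        (x α * y β ≥ d ε ↔ onebitPplus p q r00 r01 r10 r11 α β ≥ 1 - ε) :=
  onebit_separating_parameters_general p q r00 r01 r10 r11
end

section
/- Let P be a one-bit fingerprinting scheme on a finite set S with |S| > 2, and let ε ∈ [0,1]. If P₊(σ,σ) ≥ 1 − ε for every σ ∈ S (i.e., the worst-case probability of a false negative is at most ε), then there exist distinct strings μ, ν ∈ S with P₊(μ,ν) ≥ 1 − ε (i.e., the worst-case probability of a false positive is at least 1 − ε). -/
/-- If a one-bit fingerprinting scheme on a set `S` with `|S| > 2`
has worst-case false-negative probability at most `ε`, then there exist distinct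
`μ ν ∈ S` with `P₊(μ,ν) ≥ 1 - ε`. -/
theorem onebit_false_positive_lower_bound {S : Type*} [Fintype S]
    (hS : 2 < Fintype.card S)
    (p q : S → ℝ) (r00 r01 r10 r11 : ℝ)
    (hp : ∀ σ, p σ ∈ Set.Icc (0 : ℝ) 1) (hq : ∀ σ, q σ ∈ Set.Icc (0 : ℝ) 1)
    (hr00 : r00 ∈ Set.Icc (0 : ℝ) 1) (hr01 : r01 ∈ Set.Icc (0 : ℝ) 1)
    (hr10 : r10 ∈ Set.Icc (0 : ℝ) 1) (hr11 : r11 ∈ Set.Icc (0 : ℝ) 1)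
    (ε : ℝ) (hε : ε ∈ Set.Icc (0 : ℝ) 1)
    (hmatch : ∀ σ : S, onebitPplus p q r00 r01 r10 r11 σ σ ≥ 1 - ε) :
    ∃ μ ν : S, μ ≠ ν ∧ onebitPplus p q r00 r01 r10 r11 μ ν ≥ 1 - ε := by
  -- P₊(α,β) is affine in p α:  P₊(α,β) = C β + p α * D β
  have affine : ∀ α β : S, onebitPplus p q r00 r01 r10 r11 α β =
      ((1 - q β) * r00 + q β * r01) +
        p α * ((1 - q β) * (r10 - r00) + q β * (r11 - r01)) := by
    intro α β
    unfold onebitPplus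
    ring
  -- key: if p u ≤ p m ≤ p v (u,v ≠ m) then some cross term is ≥ 1-ε
  have H : ∀ u m v : S, u ≠ m → v ≠ m → p u ≤ p m → p m ≤ p v →
      ∃ μ ν : S, μ ≠ ν ∧ onebitPplus p q r00 r01 r10 r11 μ ν ≥ 1 - ε := by
    intro u m v hu hv h1 h2
    set D := (1 - q m) * (r10 - r00) + q m * (r11 - r01) with hD
    have hm := hmatch m
    rcases le_or_gt 0 D with hd | hd
    · refine ⟨v, m, hv, ?_⟩
      have : onebitPplus p q r00 r01 r10 r11 m m ≤
          onebitPplus p q r00 r01 r10 r11 v m := by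
        rw [affine m m, affine v m]
        nlinarith [mul_le_mul_of_nonneg_right h2 hd]
      linarith
    · refine ⟨u, m, hu, ?_⟩
      have : onebitPplus p q r00 r01 r10 r11 m m ≤
          onebitPplus p q r00 r01 r10 r11 u m := by
        rw [affine m m, affine u m]
        nlinarith [mul_le_mul_of_nonpos_right h1 (le_of_lt hd)]
      linarith
  classical
  -- get three distinct elements
  have h1 : 0 < Fintype.card S := by omega
  obtain ⟨a⟩ := Fintype.card_pos_iff.mp h1
  obtain ⟨b, hb⟩ := Fintype.exists_ne_of_one_lt_card (by omega) a
  have h3 : ∃ c : S, c ≠ a ∧ c ≠ b := by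
    by_contra h
    push_neg at h
    have hsub : (Finset.univ : Finset S) ⊆ {a, b} := by
      intro x _
      by_cases hx : x = a
      · simp [hx]
      · simp [h x hx]
    have := Finset.card_le_card hsub
    have h2 : ({a, b} : Finset S).card ≤ 2 := by
      apply le_trans (Finset.card_insert_le _ _)
      simp
    simp [Finset.card_univ] at this
    omega
  obtain ⟨c, hca, hcb⟩ := h3
  rcases le_total (p a) (p b) with t1 | t1 <;>
    rcases le_total (p b) (p c) with t2 | t2 <;>
      rcases le_total (p a) (p c) with t3 | t3
  · exact H a b c hb.symm hcb t1 t2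
  · exact H a b c hb.symm hcb t1 t2
  · exact H a c b hca.symm hcb.symm t3 t2
  · exact H c a b hca hb t3 t1
  · exact H b a c hb hca t1 t3
  · exact H b c a hcb.symm hca.symm t2 t3
  · exact H b a c hb hca t1 t3
  · exact H c b a hcb hb.symm t2 t1
end

section
/- Any one-bit fingerprinting scheme P on a finite set S with |S| > 2 has error probability at least 1/2: either there exists σ ∈ S with 1 − P₊(σ,σ) ≥ 1/2, or there exist distinct α, β ∈ S with P₊(α,β) ≥ 1/2. -/
/-- Any one-bit fingerprinting scheme on a set `S` with `|S| > 2`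
has error probability at least `1/2`: either some matching input has false-negative
probability at least `1/2`, or some non-matching input has false-positive probability
at least `1/2`. -/
theorem onebit_error_probability_ge_half {S : Type*} [Fintype S]
    (hS : 2 < Fintype.card S)
    (p q : S → ℝ) (r00 r01 r10 r11 : ℝ)
    (hp : ∀ σ, p σ ∈ Set.Icc (0 : ℝ) 1) (hq : ∀ σ, q σ ∈ Set.Icc (0 : ℝ) 1)
    (hr00 : r00 ∈ Set.Icc (0 : ℝ) 1) (hr01 : r01 ∈ Set.Icc (0 : ℝ) 1)
    (hr10 : r10 ∈ Set.Icc (0 : ℝ) 1) (hr11 : r11 ∈ Set.Icc (0 : ℝ) 1) :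
    (∃ σ : S, 1 - onebitPplus p q r00 r01 r10 r11 σ σ ≥ 1 / 2) ∨
      (∃ α β : S, α ≠ β ∧ onebitPplus p q r00 r01 r10 r11 α β ≥ 1 / 2) := by
  by_contra hcon
  push_neg at hcon
  obtain ⟨hdiag, hoff⟩ := hcon
  set P := onebitPplus p q r00 r01 r10 r11 with hP
  -- diagonals are > 1/2
  have hdiag' : ∀ σ : S, 1 / 2 < P σ σ := fun σ => by linarith [hdiag σ]
  -- q values are pairwise distinct for distinct inputs
  have qne : ∀ α β : S, α ≠ β → q α ≠ q β := by
    intro α β hab heq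
    have hid : P α α + P β β - P α β - P β α
        = (p α - p β) * (q α - q β) * (r00 - r01 - r10 + r11) := by
      simp only [hP, onebitPplus]; ring
    rw [heq, sub_self, mul_zero, zero_mul] at hid
    have := hdiag' α
    have := hdiag' β
    have := hoff α β hab
    have := hoff β α hab.symm
    linarith
  -- core: a middle q-value gives a contradiction (affinity in second argument)
  have key : ∀ x y z : S, y ≠ x → y ≠ z → q x < q y → q y < q z → False := by
    intro x y z hyx hyz h1 h2
    have hx := hoff y x hyx
    have hz := hoff y z hyz
    have hy := hdiag' y
    have hid : (q z - q y) * P y x + (q y - q x) * P y z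
        = (q z - q x) * P y y := by
      simp only [hP, onebitPplus]; ring
    have t1 : (q z - q y) * P y x < (q z - q y) * (1 / 2) :=
      mul_lt_mul_of_pos_left hx (by linarith)
    have t2 : (q y - q x) * P y z < (q y - q x) * (1 / 2) :=
      mul_lt_mul_of_pos_left hz (by linarith)
    have t3 : (q z - q x) * (1 / 2) < (q z - q x) * P y y :=
      mul_lt_mul_of_pos_left hy (by linarith)
    nlinarith
  -- get three distinct elements
  obtain ⟨a, b, c, hab, hac, hbc⟩ := Fintype.two_lt_card_iff.mp hS
  have qab := qne a b hab
  have qac := qne a c hac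
  have qbc := qne b c hbc
  rcases lt_or_gt_of_ne qab with h1 | h1 <;>
    rcases lt_or_gt_of_ne qac with h2 | h2 <;>
      rcases lt_or_gt_of_ne qbc with h3 | h3
  · exact key a b c hab.symm hbc h1 h3
  · exact key a c b hac.symm hbc.symm h2 h3
  · linarith
  · exact key c a b hac hab h2 h1
  · exact key b a c hab hac h1 h2
  · linarith
  · exact key b c a hbc.symm hac.symm h3 h2
  · exact key c b a hbc hab.symm h3 h1
end

section
/- Any one-bit fingerprinting scheme P on a finite set S with |S| > 2 that has one-sided error (P₊(σ,σ) = 1 for all σ ∈ S) has error probability 1: there exist distinct α, β ∈ S with P₊(α,β) = 1. -/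
private lemma onebit_key (pa qa qb r00 r01 r10 r11 : ℝ)
    (hpa0 : 0 ≤ pa) (hpa1 : pa ≤ 1)
    (hqa0 : 0 < qa) (hqa1 : qa < 1)
    (h001 : r00 ≤ 1) (h011 : r01 ≤ 1) (h101 : r10 ≤ 1) (h111 : r11 ≤ 1)
    (hdiag : (1 - pa) * (1 - qa) * r00 + (1 - pa) * qa * r01 +
      pa * (1 - qa) * r10 + pa * qa * r11 = 1) :
    (1 - pa) * (1 - qb) * r00 + (1 - pa) * qb * r01 +
      pa * (1 - qb) * r10 + pa * qb * r11 = 1 := by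
  set A := (1 - pa) * r00 + pa * r10 with hA_def
  set B := (1 - pa) * (r01 - r00) + pa * (r11 - r10) with hB_def
  have hA : A ≤ 1 := by nlinarith
  have hAB : A + B ≤ 1 := by nlinarith
  have hdiag' : A + B * qa = 1 := by rw [hA_def, hB_def]; nlinarith [hdiag]
  have hB0 : 0 ≤ B := by nlinarith
  have hB1 : B ≤ 0 := by nlinarith
  have hBz : B = 0 := le_antisymm hB1 hB0
  have hA1 : A = 1 := by nlinarith
  have hgoal : (1 - pa) * (1 - qb) * r00 + (1 - pa) * qb * r01 +
      pa * (1 - qb) * r10 + pa * qb * r11 = A + B * qb := by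
    rw [hA_def, hB_def]; ring
  rw [hgoal, hBz, hA1]; ring

/-- Any one-bit fingerprinting scheme on a set `S` with `|S| > 2`
with one-sided error (`P₊(σ,σ) = 1` for all `σ`) has error probability `1`: there are
distinct `α β ∈ S` with `P₊(α,β) = 1`. -/
theorem onebit_one_sided_error_probability_one {S : Type*} [Fintype S]
    (hS : 2 < Fintype.card S)
    (p q : S → ℝ) (r00 r01 r10 r11 : ℝ)
    (hp : ∀ σ, p σ ∈ Set.Icc (0 : ℝ) 1) (hq : ∀ σ, q σ ∈ Set.Icc (0 : ℝ) 1)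
    (hr00 : r00 ∈ Set.Icc (0 : ℝ) 1) (hr01 : r01 ∈ Set.Icc (0 : ℝ) 1)
    (hr10 : r10 ∈ Set.Icc (0 : ℝ) 1) (hr11 : r11 ∈ Set.Icc (0 : ℝ) 1)
    (honesided : ∀ σ : S, onebitPplus p q r00 r01 r10 r11 σ σ = 1) :
    ∃ α β : S, α ≠ β ∧ onebitPplus p q r00 r01 r10 r11 α β = 1 := by
  -- if q α = q β, acceptance follows from diagonal at α
  have heq : ∀ α β : S, q α = q β → onebitPplus p q r00 r01 r10 r11 α β = 1 := by
    intro α β h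
    have := honesided α
    unfold onebitPplus at this ⊢
    rw [← h]
    exact this
  -- if q α interior, accept everything
  have hint : ∀ α β : S, 0 < q α → q α < 1 →
      onebitPplus p q r00 r01 r10 r11 α β = 1 := by
    intro α β h0 h1
    have := honesided α
    unfold onebitPplus at this ⊢
    exact onebit_key (p α) (q α) (q β) r00 r01 r10 r11
      (hp α).1 (hp α).2 h0 h1 hr00.2 hr01.2 hr10.2 hr11.2 this
  obtain ⟨a, b, c, hab, hac, hbc⟩ := Fintype.two_lt_card_iff.mp hS
  have tri : ∀ σ : S, q σ = 0 ∨ q σ = 1 ∨ (0 < q σ ∧ q σ < 1) := by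
    intro σ
    rcases lt_or_eq_of_le (hq σ).1 with h0 | h0
    · rcases lt_or_eq_of_le (hq σ).2 with h1 | h1
      · exact Or.inr (Or.inr ⟨h0, h1⟩)
      · exact Or.inr (Or.inl h1)
    · exact Or.inl h0.symm
  rcases tri a with ha | ha | ha
  · rcases tri b with hb | hb | hb
    · exact ⟨a, b, hab, heq a b (by rw [ha, hb])⟩
    · rcases tri c with hc | hc | hc
      · exact ⟨a, c, hac, heq a c (by rw [ha, hc])⟩
      · exact ⟨b, c, hbc, heq b c (by rw [hb, hc])⟩
      · exact ⟨c, a, fun h => hac h.symm, hint c a hc.1 hc.2⟩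
    · exact ⟨b, a, hab.symm, hint b a hb.1 hb.2⟩
  · rcases tri b with hb | hb | hb
    · rcases tri c with hc | hc | hc
      · exact ⟨b, c, hbc, heq b c (by rw [hb, hc])⟩
      · exact ⟨a, c, hac, heq a c (by rw [ha, hc])⟩
      · exact ⟨c, a, fun h => hac h.symm, hint c a hc.1 hc.2⟩
    · exact ⟨a, b, hab, heq a b (by rw [ha, hb])⟩
    · exact ⟨b, a, hab.symm, hint b a hb.1 hb.2⟩
  · exact ⟨a, b, hab, hint a b ha.1 ha.2⟩
end

section
/- Let P be a one-bit fingerprinting scheme on a finite set S with |S| = s > 2, and let ε ∈ [0,1]. If P₊(σ,σ) ≥ 1 − ε for all σ ∈ S, then the number of pairs (α,β) ∈ S × S with α ≠ β and P₊(α,β) ≥ 1 − ε is at least (s² − 2s)/4. -/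
open Finset

private lemma half_pairs {S : Type*} [DecidableEq S] (A : Finset S) (f : S → ℝ) :
    A.card * A.card ≤ 2 * (A.offDiag.filter (fun ab => f ab.1 ≤ f ab.2)).card + A.card := by
  set T1 := A.offDiag.filter (fun ab => f ab.1 ≤ f ab.2) with hT1
  set T2 := A.offDiag.filter (fun ab => f ab.2 ≤ f ab.1) with hT2
  have hcover : A.offDiag ⊆ T1 ∪ T2 := by
    intro ab hab
    simp only [hT1, hT2, mem_union, mem_filter]
    rcases le_total (f ab.1) (f ab.2) with h | h
    · exact Or.inl ⟨hab, h⟩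
    · exact Or.inr ⟨hab, h⟩
  have himg : T2 = T1.image Prod.swap := by
    ext ⟨a, b⟩
    simp only [hT1, hT2, mem_image, mem_filter, mem_offDiag, Prod.ext_iff]
    constructor
    · rintro ⟨⟨ha, hb, hne⟩, hf⟩
      exact ⟨(b, a), ⟨⟨hb, ha, fun h => hne h.symm⟩, hf⟩, rfl, rfl⟩
    · rintro ⟨⟨x, y⟩, ⟨⟨hx, hy, hne⟩, hf⟩, h1, h2⟩
      simp only [Prod.swap] at h1 h2
      subst h1; subst h2
      exact ⟨⟨hy, hx, fun h => hne h.symm⟩, hf⟩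
  have hcard2 : T2.card ≤ T1.card := by
    rw [himg]; exact card_image_le
  have h1 : A.offDiag.card ≤ T1.card + T2.card :=
    le_trans (card_le_card hcover) (card_union_le _ _)
  have h2 := Finset.offDiag_card A
  have hk : A.card ≤ A.card * A.card := by
    rcases Nat.eq_zero_or_pos A.card with h | h
    · simp [h]
    · exact Nat.le_mul_of_pos_left _ h
  omega

open Finset in
/-- If a one-bit fingerprinting scheme on a set `S` with
`|S| = s > 2` has worst-case false-negative probability at most `ε`, then the number
of pairs `(α,β)` with `α ≠ β` and `P₊(α,β) ≥ 1 - ε` is at least `(s² - 2s)/4`. -/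
theorem onebit_many_false_positives {S : Type*} [Fintype S] [DecidableEq S]
    (hS : 2 < Fintype.card S)
    (p q : S → ℝ) (r00 r01 r10 r11 : ℝ)
    (hp : ∀ σ, p σ ∈ Set.Icc (0 : ℝ) 1) (hq : ∀ σ, q σ ∈ Set.Icc (0 : ℝ) 1)
    (hr00 : r00 ∈ Set.Icc (0 : ℝ) 1) (hr01 : r01 ∈ Set.Icc (0 : ℝ) 1)
    (hr10 : r10 ∈ Set.Icc (0 : ℝ) 1) (hr11 : r11 ∈ Set.Icc (0 : ℝ) 1)
    (ε : ℝ) (hε : ε ∈ Set.Icc (0 : ℝ) 1)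
    (hmatch : ∀ σ : S, onebitPplus p q r00 r01 r10 r11 σ σ ≥ 1 - ε) :
    (((Finset.univ : Finset (S × S)).filter
        (fun ab => ab.1 ≠ ab.2 ∧ onebitPplus p q r00 r01 r10 r11 ab.1 ab.2 ≥ 1 - ε)).card : ℝ)
      ≥ ((Fintype.card S : ℝ) ^ 2 - 2 * (Fintype.card S : ℝ)) / 4 := by
  classical
  set g : S → ℝ := fun σ => (r01 - r00) + (r00 - r01 - r10 + r11) * p σ with hg
  have key : ∀ α β : S, onebitPplus p q r00 r01 r10 r11 α β
      = onebitPplus p q r00 r01 r10 r11 α α + (q β - q α) * g α := by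
    intro α β
    simp only [onebitPplus, hg]
    ring
  set A : Finset S := univ.filter (fun σ => 0 ≤ g σ) with hA
  set B : Finset S := univ.filter (fun σ => ¬ 0 ≤ g σ) with hB
  set T := (Finset.univ : Finset (S × S)).filter
      (fun ab => ab.1 ≠ ab.2 ∧ onebitPplus p q r00 r01 r10 r11 ab.1 ab.2 ≥ 1 - ε) with hT
  set T1 := A.offDiag.filter (fun ab => q ab.1 ≤ q ab.2) with hT1
  set T2 := B.offDiag.filter (fun ab => q ab.2 ≤ q ab.1) with hT2
  have hT1sub : T1 ⊆ T := by
    intro ab hab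
    simp only [hT1, mem_filter, mem_offDiag, hA] at hab
    obtain ⟨⟨ha, hb, hne⟩, hle⟩ := hab
    simp only [mem_filter, mem_univ, true_and] at ha hb
    simp only [hT, mem_filter, mem_univ, true_and]
    refine ⟨hne, ?_⟩
    rw [key ab.1 ab.2]
    have := hmatch ab.1
    nlinarith [mul_nonneg (sub_nonneg.mpr hle) ha]
  have hT2sub : T2 ⊆ T := by
    intro ab hab
    simp only [hT2, mem_filter, mem_offDiag, hB] at hab
    obtain ⟨⟨ha, hb, hne⟩, hle⟩ := hab
    simp only [mem_filter, mem_univ, true_and] at ha hb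
    simp only [hT, mem_filter, mem_univ, true_and]
    refine ⟨hne, ?_⟩
    rw [key ab.1 ab.2]
    have := hmatch ab.1
    have hga : g ab.1 ≤ 0 := le_of_not_ge ha
    nlinarith [mul_nonneg (sub_nonneg.mpr hle) (neg_nonneg.mpr hga)]
  have hdisj : Disjoint T1 T2 := by
    rw [Finset.disjoint_left]
    intro ab h1 h2
    simp only [hT1, mem_filter, mem_offDiag, hA] at h1
    simp only [hT2, mem_filter, mem_offDiag, hB] at h2
    simp only [mem_filter, mem_univ, true_and] at h1 h2
    exact h2.1.1 h1.1.1
  have hsub : T1 ∪ T2 ⊆ T := union_subset hT1sub hT2sub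
  have hcardT : T1.card + T2.card ≤ T.card := by
    rw [← card_union_of_disjoint hdisj]
    exact card_le_card hsub
  have h1 := half_pairs A q
  have h2 := half_pairs B (fun σ => - q σ)
  have h2' : B.card * B.card ≤ 2 * T2.card + B.card := by
    have : T2 = B.offDiag.filter (fun ab => (fun σ => - q σ) ab.1 ≤ (fun σ => - q σ) ab.2) := by
      apply filter_congr
      intro ab _
      simp
    rw [this]
    exact h2
  have hAB : A.card + B.card = Fintype.card S := by
    rw [hA, hB]
    rw [Finset.card_filter_add_card_filter_not, card_univ]
  -- now real arithmetic
  have hT1c : (A.card : ℝ) * A.card ≤ 2 * T1.card + A.card := by exact_mod_cast h1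
  have hT2c : (B.card : ℝ) * B.card ≤ 2 * T2.card + B.card := by exact_mod_cast h2'
  have hABc : (A.card : ℝ) + B.card = Fintype.card S := by exact_mod_cast hAB
  have hTc : (T1.card : ℝ) + T2.card ≤ T.card := by exact_mod_cast hcardT
  nlinarith [sq_nonneg ((A.card : ℝ) - B.card)]
end

section
/- Let S be a finite set, δ ∈ [0,1], and let {φ_σ}_{σ∈S} be unit vectors in ℂ² such that |⟨φ_α, φ_β⟩| ≤ δ for all α ≠ β. Then the controlled-SWAP test fingerprinting scheme with these fingerprints has one-sided error with error probability at most (1 + δ²)/2: on matching inputs the acceptance probability 1 − (1/4)‖φ_σ ⊗ φ_σ − φ_σ ⊗ φ_σ‖² equals 1, and on any input (α,β) with α ≠ β the acceptance probability 1 − (1/4)‖φ_α ⊗ φ_β − φ_β ⊗ φ_α‖² equals (1 + |⟨φ_α, φ_β⟩|²)/2, which is at most (1 + δ²)/2. -/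
/-! The acceptance probability `1 - ¼‖φ_α ⊗ φ_β - φ_β ⊗ φ_α‖²` is computed by expanding the
square: both tensors are unit vectors and `⟪a ⊗ b, b ⊗ a⟫ = ⟪a, b⟫⟪b, a⟫ = |⟪a, b⟫|²`, so
`‖a ⊗ b - b ⊗ a‖² = 2 - 2|⟪a, b⟫|²`. The bound by `(1 + δ²)/2` is then monotonicity of squaring. -/

open scoped InnerProductSpace

noncomputable def tens (f g : EuclideanSpace ℂ (Fin 2)) :
    EuclideanSpace ℂ (Fin 2 × Fin 2) :=
  (WithLp.equiv 2 (Fin 2 × Fin 2 → ℂ)).symm (fun ij => f ij.1 * g ij.2)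

section Tens

variable (a b c d : EuclideanSpace ℂ (Fin 2))

theorem tens_apply (ij : Fin 2 × Fin 2) : tens a b ij = a ij.1 * b ij.2 := rfl

theorem inner_tens_tens : ⟪tens a b, tens c d⟫_ℂ = ⟪a, c⟫_ℂ * ⟪b, d⟫_ℂ := by
  simp only [PiLp.inner_apply, tens_apply, Fintype.sum_prod_type, Fin.sum_univ_two,
    RCLike.inner_apply, map_mul]
  ring

theorem norm_tens_sq : ‖tens a b‖ ^ 2 = ‖a‖ ^ 2 * ‖b‖ ^ 2 := by
  rw [← RCLike.ofReal_inj (K := ℂ)]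
  push_cast
  simp only [← inner_self_eq_norm_sq_to_K, inner_tens_tens]

theorem re_inner_tens_tens_swap : RCLike.re ⟪tens a b, tens b a⟫_ℂ = ‖⟪a, b⟫_ℂ‖ ^ 2 := by
  rw [inner_tens_tens, ← inner_conj_symm b a, RCLike.mul_conj]
  norm_cast

theorem norm_tens_sub_tens_swap_sq :
    ‖tens a b - tens b a‖ ^ 2 = 2 * (‖a‖ ^ 2 * ‖b‖ ^ 2 - ‖⟪a, b⟫_ℂ‖ ^ 2) := by
  rw [@norm_sub_sq ℂ, norm_tens_sq, norm_tens_sq, re_inner_tens_tens_swap]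
  ring

theorem cswap_accept_prob_of_norm_eq_one (ha : ‖a‖ = 1) (hb : ‖b‖ = 1) :
    1 - (1 / 4) * ‖tens a b - tens b a‖ ^ 2 = (1 + ‖⟪a, b⟫_ℂ‖ ^ 2) / 2 := by
  rw [norm_tens_sub_tens_swap_sq, ha, hb]
  ring

end Tens

theorem cswap_scheme_one_sided_error_general {S : Type*}
    (δ : ℝ)
    (φ : S → EuclideanSpace ℂ (Fin 2)) (hunit : ∀ σ, ‖φ σ‖ = 1)
    (hsep : ∀ α β : S, α ≠ β → ‖⟪φ α, φ β⟫_ℂ‖ ≤ δ) :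
    (∀ σ : S, 1 - (1 / 4) * ‖tens (φ σ) (φ σ) - tens (φ σ) (φ σ)‖ ^ 2 = 1) ∧
    (∀ α β : S, α ≠ β →
      1 - (1 / 4) * ‖tens (φ α) (φ β) - tens (φ β) (φ α)‖ ^ 2
          = (1 + ‖⟪φ α, φ β⟫_ℂ‖ ^ 2) / 2 ∧
      1 - (1 / 4) * ‖tens (φ α) (φ β) - tens (φ β) (φ α)‖ ^ 2 ≤ (1 + δ ^ 2) / 2) := by
  refine ⟨fun σ => by simp, fun α β hne => ?_⟩
  have haccept := cswap_accept_prob_of_norm_eq_one _ _ (hunit α) (hunit β)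
  refine ⟨haccept, haccept ▸ ?_⟩
  have hsq : ‖⟪φ α, φ β⟫_ℂ‖ ^ 2 ≤ δ ^ 2 := pow_le_pow_left₀ (norm_nonneg _) (hsep α β hne) 2
  linarith

/-- The controlled-SWAP fingerprinting scheme built from unit
fingerprints with pairwise inner products at most `δ` is a one-sided error scheme with
error probability at most `(1 + δ²)/2`. -/
theorem cswap_scheme_one_sided_error {S : Type*} [Fintype S]
    (δ : ℝ) (hδ : δ ∈ Set.Icc (0 : ℝ) 1)
    (φ : S → EuclideanSpace ℂ (Fin 2)) (hunit : ∀ σ, ‖φ σ‖ = 1)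
    (hsep : ∀ α β : S, α ≠ β → ‖⟪φ α, φ β⟫_ℂ‖ ≤ δ) :
    (∀ σ : S, 1 - (1 / 4) * ‖tens (φ σ) (φ σ) - tens (φ σ) (φ σ)‖ ^ 2 = 1) ∧
    (∀ α β : S, α ≠ β →
      1 - (1 / 4) * ‖tens (φ α) (φ β) - tens (φ β) (φ α)‖ ^ 2
          = (1 + ‖⟪φ α, φ β⟫_ℂ‖ ^ 2) / 2 ∧
      1 - (1 / 4) * ‖tens (φ α) (φ β) - tens (φ β) (φ α)‖ ^ 2 ≤ (1 + δ ^ 2) / 2) :=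
  cswap_scheme_one_sided_error_general δ φ hunit hsep
end

section
/- There exist four unit vectors φ₀, φ₁, φ₂, φ₃ in ℂ² such that |⟨φ_i, φ_j⟩| = 1/√3 for all i ≠ j. Concretely, one may take φ₀ = |0⟩ and φ_k = (1/√3)(|0⟩ + e^{2πi(k−1)/3}·√2·|1⟩) for k = 1, 2, 3. -/
/-!
With `ψ e = (|0⟩ + √2 e |1⟩) / √3` one has `⟪|0⟩, ψ e⟫ = 1/√3` and
`⟪ψ e, ψ f⟫ = (1 + 2 ē f) / 3`. If `ē f = ζ` is a primitive cube root of unity then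
`(1 + 2ζ)² = 1 + 4(ζ + ζ²) = -3`, so this overlap has modulus `√3 / 3`; the three phases
`e^{2πi(k-1)/3}` differ pairwise by such roots.
-/

open scoped InnerProductSpace
open Complex ComplexConjugate
open scoped Real

noncomputable def tetrahedralState (e : ℂ) : EuclideanSpace ℂ (Fin 2) :=
  (Real.sqrt 3)⁻¹ •
    (EuclideanSpace.single 0 (1 : ℂ) + (e * Real.sqrt 2) • EuclideanSpace.single 1 (1 : ℂ))

lemma tetrahedralState_apply_zero (e : ℂ) : tetrahedralState e 0 = (Real.sqrt 3 : ℂ)⁻¹ := by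
  simp [tetrahedralState, Complex.real_smul]

lemma tetrahedralState_apply_one (e : ℂ) :
    tetrahedralState e 1 = (Real.sqrt 3 : ℂ)⁻¹ * (e * Real.sqrt 2) := by
  simp [tetrahedralState, Complex.real_smul]

lemma norm_inner_single_zero_tetrahedralState (e : ℂ) :
    ‖⟪EuclideanSpace.single 0 1, tetrahedralState e⟫_ℂ‖ = 1 / Real.sqrt 3 := by
  rw [EuclideanSpace.inner_single_left, tetrahedralState_apply_zero, map_one, one_mul]
  simp

lemma inner_tetrahedralState (e f : ℂ) :
    ⟪tetrahedralState e, tetrahedralState f⟫_ℂ = (1 + 2 * (conj e * f)) / 3 := by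
  have h3 : (Real.sqrt 3 : ℂ) ^ 2 = 3 := by norm_cast; simp
  have h2 : (Real.sqrt 2 : ℂ) ^ 2 = 2 := by norm_cast; simp
  have h3' : (Real.sqrt 3 : ℂ) ≠ 0 := by norm_cast; positivity
  simp only [PiLp.inner_apply, Fin.sum_univ_two, RCLike.inner_apply, tetrahedralState_apply_zero,
    tetrahedralState_apply_one, map_mul, map_inv₀, conj_ofReal]
  field_simp
  linear_combination (conj e * f * 3) * h2 - (1 + 2 * (conj e * f)) * h3

lemma norm_tetrahedralState {e : ℂ} (he : ‖e‖ = 1) : ‖tetrahedralState e‖ = 1 := by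
  have hsq : ‖tetrahedralState e‖ ^ 2 = 1 := by
    rw [← inner_self_eq_norm_sq (𝕜 := ℂ), inner_tetrahedralState, conj_mul', he]
    norm_num
  exact (pow_eq_one_iff_of_nonneg (norm_nonneg _) two_ne_zero).1 hsq

lemma IsPrimitiveRoot.norm_one_add_two_mul {ζ : ℂ} (hζ : IsPrimitiveRoot ζ 3) :
    ‖1 + 2 * ζ‖ = Real.sqrt 3 := by
  have hsum : 1 + ζ + ζ ^ 2 = 0 := by
    simpa [Finset.sum_range_succ] using hζ.geom_sum_eq_zero (by norm_num)
  have hsq : (1 + 2 * ζ) ^ 2 = -3 := by linear_combination 4 * hsum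
  rw [← Real.sqrt_sq (norm_nonneg _), ← norm_pow, hsq]
  norm_num

lemma norm_inner_tetrahedralState {e f : ℂ} (h : IsPrimitiveRoot (conj e * f) 3) :
    ‖⟪tetrahedralState e, tetrahedralState f⟫_ℂ‖ = 1 / Real.sqrt 3 := by
  rw [inner_tetrahedralState, norm_div, h.norm_one_add_two_mul]
  field_simp
  norm_num

lemma isPrimitiveRoot_exp_two_pi_I_mul_div_three {m : ℤ} (hm : ¬ 3 ∣ m) :
    IsPrimitiveRoot (cexp (2 * π * I * (m / 3))) 3 := by
  have := isPrimitiveRoot_exp_of_isCoprime m 3 (by norm_num)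
    ((Prime.coprime_iff_not_dvd Int.prime_three).2 hm).symm
  exact_mod_cast this

lemma norm_exp_two_pi_I_mul_sub_one_div_three (k : ℕ) :
    ‖cexp (2 * π * I * ((k : ℂ) - 1) / 3)‖ = 1 := by
  rw [show 2 * π * I * ((k : ℂ) - 1) / 3 = (2 * π * ((k : ℝ) - 1) / 3 : ℝ) * I by push_cast; ring]
  exact norm_exp_ofReal_mul_I _

lemma conj_exp_mul_exp_two_pi_I_div_three (k l : ℕ) :
    conj (cexp (2 * π * I * ((k : ℂ) - 1) / 3)) * cexp (2 * π * I * ((l : ℂ) - 1) / 3) =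
      cexp (2 * π * I * (((l - k : ℤ) : ℂ) / 3)) := by
  rw [← exp_conj, ← exp_add]
  congr 1
  simp only [map_div₀, map_mul, map_sub, conj_ofReal, conj_I, map_natCast, map_one, map_ofNat]
  push_cast
  ring

/-- There exist four unit vectors in `ℂ²` whose pairwise inner
products all have absolute value `1/√3`; concretely, `φ₀ = |0⟩` and
`φ_k = (1/√3)(|0⟩ + e^{2πi(k−1)/3}·√2·|1⟩)` for `k = 1, 2, 3` (a regular tetrahedron
on the Bloch sphere). -/
theorem exists_four_states_inner_inv_sqrt_three :
    ∃ φ : Fin 4 → EuclideanSpace ℂ (Fin 2),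
      φ 0 = EuclideanSpace.single 0 1 ∧
      (∀ k : Fin 4, k ≠ 0 →
        φ k = (Real.sqrt 3)⁻¹ •
          (EuclideanSpace.single 0 (1 : ℂ) +
            (Complex.exp (2 * Real.pi * Complex.I * ((k.val : ℂ) - 1) / 3) *
              Real.sqrt 2) • EuclideanSpace.single 1 (1 : ℂ))) ∧
      (∀ i, ‖φ i‖ = 1) ∧
      (∀ i j, i ≠ j → ‖⟪φ i, φ j⟫_ℂ‖ = 1 / Real.sqrt 3) := by
  set phase : Fin 4 → ℂ := fun k ↦ cexp (2 * π * I * ((k.val : ℂ) - 1) / 3)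
  refine ⟨fun k ↦ if k = 0 then EuclideanSpace.single 0 1 else tetrahedralState (phase k),
    if_pos rfl, fun k hk ↦ if_neg hk, fun i ↦ ?_, fun i j hij ↦ ?_⟩ <;> dsimp only
  · split_ifs
    · simp
    · exact norm_tetrahedralState (norm_exp_two_pi_I_mul_sub_one_div_three _)
  · split_ifs with hi hj hj
    · exact absurd (hi.trans hj.symm) hij
    · exact norm_inner_single_zero_tetrahedralState _
    · rw [← inner_conj_symm, RCLike.norm_conj, norm_inner_single_zero_tetrahedralState]
    · refine norm_inner_tetrahedralState ?_
      rw [conj_exp_mul_exp_two_pi_I_div_three]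
      refine isPrimitiveRoot_exp_two_pi_I_mul_div_three ?_
      omega
end

section
/- There exists a constant c > 0 such that for every integer s ≥ 2 there exist s unit vectors φ₁, …, φ_s in ℂ² with |⟨φ_i, φ_j⟩| ≤ 1 − c/s for all i ≠ j. -/
/-!
Normalising `(1, z)` maps the plane into the unit sphere of `ℂ²` (inverse stereographic
projection onto the Bloch sphere), and the images `ψ_z` satisfy
`|⟨ψ_z, ψ_w⟩|² = 1 - |z - w|² / ((1 + |z|²) (1 + |w|²))`. Hence `s` points of a bounded region
with pairwise distances of order `s^(-1/2)` give states with `|⟨ψ_i, ψ_j⟩| ≤ 1 - c / s`; the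
square grid of mesh `1 / m`, `m ≈ √s`, in the unit square supplies such points.
-/

open scoped InnerProductSpace ComplexConjugate

theorem Complex.norm_one_add_conj_mul_sq (z w : ℂ) :
    ‖1 + conj z * w‖ ^ 2 = (1 + ‖z‖ ^ 2) * (1 + ‖w‖ ^ 2) - ‖z - w‖ ^ 2 := by
  simp only [Complex.sq_norm, normSq_apply, add_re, add_im, mul_re, mul_im, sub_re, sub_im,
    conj_re, conj_im, one_re, one_im]
  ring

theorem EuclideanSpace.norm_toLp_two {𝕜 : Type*} [RCLike 𝕜] (a b : 𝕜) :
    ‖!₂[a, b]‖ = √(‖a‖ ^ 2 + ‖b‖ ^ 2) := by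
  simp [EuclideanSpace.norm_eq, Fin.sum_univ_two]

theorem EuclideanSpace.inner_toLp_two {𝕜 : Type*} [RCLike 𝕜] (a b c d : 𝕜) :
    ⟪!₂[a, b], !₂[c, d]⟫_𝕜 = conj a * c + conj b * d := by
  simp [PiLp.inner_apply, Fin.sum_univ_two, mul_comm]

noncomputable def unitLift (z : ℂ) : EuclideanSpace ℂ (Fin 2) :=
  ((√(1 + ‖z‖ ^ 2) : ℝ) : ℂ)⁻¹ • !₂[1, z]

lemma norm_unitLift (z : ℂ) : ‖unitLift z‖ = 1 := by
  have : 0 < √(1 + ‖z‖ ^ 2) := by positivity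
  rw [unitLift, norm_smul, EuclideanSpace.norm_toLp_two, norm_one, one_pow, norm_inv,
    Complex.norm_real, Real.norm_of_nonneg this.le, inv_mul_cancel₀ this.ne']

lemma norm_inner_unitLift_sq (z w : ℂ) :
    ‖⟪unitLift z, unitLift w⟫_ℂ‖ ^ 2 = 1 - ‖z - w‖ ^ 2 / ((1 + ‖z‖ ^ 2) * (1 + ‖w‖ ^ 2)) := by
  have hz : 0 < 1 + ‖z‖ ^ 2 := by positivity
  have hw : 0 < 1 + ‖w‖ ^ 2 := by positivity
  rw [unitLift, unitLift, inner_smul_left, inner_smul_right,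
    EuclideanSpace.inner_toLp_two, map_one, one_mul, norm_mul, norm_mul,
    mul_pow, mul_pow, Complex.norm_one_add_conj_mul_sq]
  simp only [map_inv₀, Complex.conj_ofReal, norm_inv, Complex.norm_real, inv_pow,
    Real.norm_of_nonneg (Real.sqrt_nonneg _), Real.sq_sqrt hz.le, Real.sq_sqrt hw.le]
  field_simp

lemma norm_inner_unitLift_le {z w : ℂ} {R : ℝ} (hz : ‖z‖ ^ 2 ≤ R) (hw : ‖w‖ ^ 2 ≤ R) :
    ‖⟪unitLift z, unitLift w⟫_ℂ‖ ≤ 1 - ‖z - w‖ ^ 2 / (2 * (1 + R) ^ 2) := by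
  have hsq := norm_inner_unitLift_sq z w
  have hx : ‖z - w‖ ^ 2 / (1 + R) ^ 2 ≤ ‖z - w‖ ^ 2 / ((1 + ‖z‖ ^ 2) * (1 + ‖w‖ ^ 2)) := by
    have hR : 0 ≤ 1 + R := add_nonneg zero_le_one ((sq_nonneg _).trans hz)
    rw [sq (1 + R)]
    gcongr
  set x := ‖z - w‖ ^ 2 / ((1 + ‖z‖ ^ 2) * (1 + ‖w‖ ^ 2))
  have hnn := norm_nonneg ⟪unitLift z, unitLift w⟫_ℂ
  have hx1 : x ≤ 1 := by nlinarith
  calc _ ≤ 1 - x / 2 := by nlinarith [sq_nonneg x] -- `√(1 - x) ≤ 1 - x / 2`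
    _ ≤ _ := by rw [mul_comm, ← div_div]; linarith

def gridPoint (m k : ℕ) : ℂ := ⟨(k / m : ℕ), (k % m : ℕ)⟩

lemma one_le_norm_gridPoint_sub (m : ℕ) {k l : ℕ} (h : k ≠ l) :
    1 ≤ ‖gridPoint m k - gridPoint m l‖ := by
  by_cases hq : k / m = l / m
  · have hr : k % m ≠ l % m := fun hr => h (by rw [← Nat.div_add_mod k m, hq, hr, Nat.div_add_mod])
    calc 1 ≤ dist (k % m) (l % m) := Nat.pairwise_one_le_dist hr
      _ = |(gridPoint m k - gridPoint m l).im| := by simp [gridPoint, Nat.dist_eq]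
      _ ≤ _ := Complex.abs_im_le_norm _
  · calc 1 ≤ dist (k / m) (l / m) := Nat.pairwise_one_le_dist hq
      _ = |(gridPoint m k - gridPoint m l).re| := by simp [gridPoint, Nat.dist_eq]
      _ ≤ _ := Complex.abs_re_le_norm _

lemma norm_gridPoint_sq_le {m k : ℕ} (hk : k < m ^ 2) : ‖gridPoint m k‖ ^ 2 ≤ 2 * m ^ 2 := by
  have hq : ((k / m : ℕ) : ℝ) ≤ m := by
    exact_mod_cast (Nat.div_lt_of_lt_mul (by rwa [sq] at hk)).le
  have hr : ((k % m : ℕ) : ℝ) ≤ m := by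
    exact_mod_cast (Nat.mod_lt k (Nat.pos_of_ne_zero (by rintro rfl; simp at hk))).le
  rw [Complex.sq_norm, gridPoint, Complex.normSq_mk]
  nlinarith [(k / m).cast_nonneg (α := ℝ), (k % m).cast_nonneg (α := ℝ)]

lemma exists_sq_mem_Ioc {s : ℕ} (hs : 0 < s) : ∃ m : ℕ, s < m ^ 2 ∧ m ^ 2 ≤ 4 * s := by
  refine ⟨s.sqrt + 1, Nat.lt_succ_sqrt' s, ?_⟩
  have := Nat.sqrt_le' s
  have := Nat.sqrt_le_self s
  nlinarith

lemma exists_points_sq_dist_ge {s : ℕ} (hs : 0 < s) :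
    ∃ z : Fin s → ℂ, (∀ i, ‖z i‖ ^ 2 ≤ 2) ∧ ∀ i j, i ≠ j → 1 / (4 * s) ≤ ‖z i - z j‖ ^ 2 := by
  obtain ⟨m, hsm, hm4⟩ := exists_sq_mem_Ioc hs
  have hm : (0 : ℝ) < m ^ 2 := by exact_mod_cast (Nat.zero_le _).trans_lt hsm
  refine ⟨fun i => gridPoint m i / m, fun i => ?_, fun i j hij => ?_⟩
  · rw [norm_div, div_pow, Complex.norm_natCast, div_le_iff₀ hm]
    exact norm_gridPoint_sq_le (i.2.trans hsm)
  · rw [← sub_div, norm_div, div_pow, Complex.norm_natCast, le_div_iff₀ hm]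
    have h1 : (1 : ℝ) ≤ ‖gridPoint m i - gridPoint m j‖ ^ 2 :=
      one_le_pow₀ (one_le_norm_gridPoint_sub m (Fin.val_injective.ne hij))
    have h2 : (m : ℝ) ^ 2 ≤ 4 * s := by exact_mod_cast hm4
    calc 1 / (4 * s) * (m : ℝ) ^ 2 ≤ 1 := by
          rw [div_mul_eq_mul_div, one_mul, div_le_one (by positivity)]; exact h2
      _ ≤ _ := h1

/-- There is a constant `c > 0` such that for every `s ≥ 2` there
are `s` unit vectors in `ℂ²` with pairwise inner products of absolute value at most
`1 - c/s`. -/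
theorem exists_many_states_inner_le_one_sub :
    ∃ c : ℝ, 0 < c ∧ ∀ s : ℕ, 2 ≤ s →
      ∃ φ : Fin s → EuclideanSpace ℂ (Fin 2),
        (∀ i, ‖φ i‖ = 1) ∧ ∀ i j, i ≠ j → ‖⟪φ i, φ j⟫_ℂ‖ ≤ 1 - c / s := by
  refine ⟨1 / 72, by norm_num, fun s hs => ?_⟩
  obtain ⟨z, hz, hsep⟩ := exists_points_sq_dist_ge (by omega : 0 < s)
  refine ⟨fun i => unitLift (z i), fun i => norm_unitLift _, fun i j hij => ?_⟩
  calc _ ≤ 1 - ‖z i - z j‖ ^ 2 / (2 * (1 + 2) ^ 2) := norm_inner_unitLift_le (hz i) (hz j)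
    _ ≤ 1 - 1 / (4 * s) / (2 * (1 + 2) ^ 2) := by gcongr; exact hsep i j hij
    _ = 1 - 1 / 72 / s := by ring
end

section
/- Let C > 0 be real, let S be a set, and let u : S → ℂ. For each σ ∈ S define φ_σ = (1/√(1+|u_σ|²))(|0⟩ + u_σ|1⟩) and ψ_σ = (1/√(1+C²|u_σ|²))(|0⟩ + C·u_σ|1⟩) in ℂ², let R = (1/√(1+C²))(|0⟩⊗|1⟩ − C·|1⟩⊗|0⟩) in ℂ² ⊗ ℂ², and set K_σ = C²(1+|u_σ|²) / ((1+C²|u_σ|²)(1+C²)). Then for all α, β ∈ S: |⟨R, φ_α ⊗ ψ_β⟩|² = K_β·(1 − |⟨φ_β, φ_α⟩|²). In particular, |⟨R, φ_α ⊗ ψ_β⟩|² = C²|u_α − u_β|² / ((1+|u_α|²)(1+C²|u_β|²)(1+C²)). -/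
/-! Up to normalisation, `⟪R, φ_α ⊗ ψ_β⟫ = C (u_β - u_α)` and
`⟪φ_β, φ_α⟫ = 1 + conj u_β · u_α`, so both formulas come down to the Lagrange-type identity
`|1 + conj b · a|² + |a - b|² = (1 + |a|²)(1 + |b|²)`. -/

open scoped InnerProductSpace

open EuclideanSpace ComplexConjugate

theorem inner_tens (a b c d : EuclideanSpace ℂ (Fin 2)) :
    ⟪tens a b, tens c d⟫_ℂ = ⟪a, c⟫_ℂ * ⟪b, d⟫_ℂ := by
  simp only [tens, PiLp.inner_apply, Fintype.sum_prod_type, Finset.sum_mul_sum]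
  simp [mul_mul_mul_comm]

theorem tens_smul_smul (r s : ℝ) (x y : EuclideanSpace ℂ (Fin 2)) :
    tens (r • x) (s • y) = (r * s) • tens x y := by
  ext ij
  simp only [tens, PiLp.smul_apply, Complex.real_smul, WithLp.equiv_symm_apply,
    Complex.ofReal_mul]
  ring

theorem inner_tens_single_sub_smul_tens_single (c : ℝ) (x y : EuclideanSpace ℂ (Fin 2)) :
    ⟪tens (single 0 1) (single 1 1) - (c : ℂ) • tens (single 1 1) (single 0 1),
      tens x y⟫_ℂ = x 0 * y 1 - c * (x 1 * y 0) := by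
  simp [inner_tens, inner_single_left]

theorem inner_single_add_smul_single (z w : ℂ) :
    ⟪single (0 : Fin 2) (1 : ℂ) + z • single 1 1, single 0 1 + w • single 1 1⟫_ℂ =
      1 + conj z * w := by
  simp [inner_single_left, mul_comm]

theorem norm_inner_inv_sqrt_smul_sq {E : Type*} [SeminormedAddCommGroup E]
    [InnerProductSpace ℂ E] {a b : ℝ} (ha : 0 ≤ a) (hb : 0 ≤ b) (x y : E) :
    ‖⟪(√a)⁻¹ • x, (√b)⁻¹ • y⟫_ℂ‖ ^ 2 = ‖⟪x, y⟫_ℂ‖ ^ 2 / (a * b) := by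
  rw [← Complex.coe_smul, ← Complex.coe_smul, inner_smul_left, inner_smul_right,
    Complex.conj_ofReal]
  simp only [norm_mul, Complex.norm_real, mul_pow, Real.norm_eq_abs, sq_abs, inv_pow,
    Real.sq_sqrt ha, Real.sq_sqrt hb]
  field_simp

theorem norm_one_add_conj_mul_sq_add_norm_sub_sq (a b : ℂ) :
    ‖1 + conj b * a‖ ^ 2 + ‖a - b‖ ^ 2 = (1 + ‖a‖ ^ 2) * (1 + ‖b‖ ^ 2) := by
  simp only [Complex.sq_norm, Complex.normSq_apply, Complex.add_re, Complex.add_im,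
    Complex.mul_re, Complex.mul_im, Complex.sub_re, Complex.sub_im, Complex.conj_re,
    Complex.conj_im, Complex.one_re, Complex.one_im]
  ring

theorem canonical_rejection_probability_general {S : Type*} (C : ℝ)
    (u : S → ℂ) (φ ψ : S → EuclideanSpace ℂ (Fin 2))
    (hφ : ∀ σ, φ σ = (Real.sqrt (1 + ‖u σ‖ ^ 2))⁻¹ •
      (EuclideanSpace.single 0 1 + u σ • EuclideanSpace.single 1 1))
    (hψ : ∀ σ, ψ σ = (Real.sqrt (1 + C ^ 2 * ‖u σ‖ ^ 2))⁻¹ •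
      (EuclideanSpace.single 0 1 + ((C : ℂ) * u σ) • EuclideanSpace.single 1 1))
    (R : EuclideanSpace ℂ (Fin 2 × Fin 2))
    (hR : R = (Real.sqrt (1 + C ^ 2))⁻¹ •
      (tens (EuclideanSpace.single 0 1) (EuclideanSpace.single 1 1) -
        (C : ℂ) • tens (EuclideanSpace.single 1 1) (EuclideanSpace.single 0 1)))
    (K : S → ℝ)
    (hK : ∀ σ, K σ = C ^ 2 * (1 + ‖u σ‖ ^ 2) /
      ((1 + C ^ 2 * ‖u σ‖ ^ 2) * (1 + C ^ 2))) :
    ∀ α β : S,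
      ‖⟪R, tens (φ α) (ψ β)⟫_ℂ‖ ^ 2 = K β * (1 - ‖⟪φ β, φ α⟫_ℂ‖ ^ 2) ∧
      ‖⟪R, tens (φ α) (ψ β)⟫_ℂ‖ ^ 2 =
        C ^ 2 * ‖u α - u β‖ ^ 2 /
          ((1 + ‖u α‖ ^ 2) * (1 + C ^ 2 * ‖u β‖ ^ 2) * (1 + C ^ 2)) := by
  intro α β
  have fidelity : ‖⟪φ β, φ α⟫_ℂ‖ ^ 2 =
      ‖1 + conj (u β) * u α‖ ^ 2 / ((1 + ‖u β‖ ^ 2) * (1 + ‖u α‖ ^ 2)) := by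
    rw [hφ, hφ, norm_inner_inv_sqrt_smul_sq (by positivity) (by positivity),
      inner_single_add_smul_single]
  have rejection : ‖⟪R, tens (φ α) (ψ β)⟫_ℂ‖ ^ 2 =
      C ^ 2 * ‖u α - u β‖ ^ 2 /
        ((1 + C ^ 2) * ((1 + ‖u α‖ ^ 2) * (1 + C ^ 2 * ‖u β‖ ^ 2))) := by
    rw [hR, hφ, hψ, tens_smul_smul, ← mul_inv, ← Real.sqrt_mul (by positivity),
      norm_inner_inv_sqrt_smul_sq (by positivity) (by positivity),
      inner_tens_single_sub_smul_tens_single]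
    simp [← mul_sub, mul_pow, norm_sub_rev (u β)]
  refine ⟨?_, by rw [rejection]; ring⟩
  have lagrange := norm_one_add_conj_mul_sq_add_norm_sub_sq (u α) (u β)
  rw [rejection, fidelity, hK]
  -- otherwise `field_simp` reorders the product inside the norm and `lagrange` stops matching
  generalize ‖1 + conj (u β) * u α‖ ^ 2 = F at lagrange ⊢
  field_simp
  linear_combination C ^ 2 * lagrange

/-- In a canonical strict one-qubit fingerprinting scheme with
parameter `C > 0`, Alice's fingerprints `φ_σ ∝ |0⟩ + u_σ|1⟩`, Bob's fingerprints
`ψ_σ ∝ |0⟩ + C·u_σ|1⟩`, and reject state `R ∝ |01⟩ − C|10⟩`, the rejection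
probability of the hybrid state `φ_α ⊗ ψ_β` is
`|⟨R, φ_α ⊗ ψ_β⟩|² = K_β (1 − |⟨φ_β, φ_α⟩|²)`
with `K_σ = C²(1+|u_σ|²)/((1+C²|u_σ|²)(1+C²))`; explicitly it equals
`C²|u_α − u_β|²/((1+|u_α|²)(1+C²|u_β|²)(1+C²))`. -/
theorem canonical_rejection_probability {S : Type*} (C : ℝ) (hC : 0 < C)
    (u : S → ℂ) (φ ψ : S → EuclideanSpace ℂ (Fin 2))
    (hφ : ∀ σ, φ σ = (Real.sqrt (1 + ‖u σ‖ ^ 2))⁻¹ •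
      (EuclideanSpace.single 0 1 + u σ • EuclideanSpace.single 1 1))
    (hψ : ∀ σ, ψ σ = (Real.sqrt (1 + C ^ 2 * ‖u σ‖ ^ 2))⁻¹ •
      (EuclideanSpace.single 0 1 + ((C : ℂ) * u σ) • EuclideanSpace.single 1 1))
    (R : EuclideanSpace ℂ (Fin 2 × Fin 2))
    (hR : R = (Real.sqrt (1 + C ^ 2))⁻¹ •
      (tens (EuclideanSpace.single 0 1) (EuclideanSpace.single 1 1) -
        (C : ℂ) • tens (EuclideanSpace.single 1 1) (EuclideanSpace.single 0 1)))
    (K : S → ℝ)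
    (hK : ∀ σ, K σ = C ^ 2 * (1 + ‖u σ‖ ^ 2) /
      ((1 + C ^ 2 * ‖u σ‖ ^ 2) * (1 + C ^ 2))) :
    ∀ α β : S,
      ‖⟪R, tens (φ α) (ψ β)⟫_ℂ‖ ^ 2 = K β * (1 - ‖⟪φ β, φ α⟫_ℂ‖ ^ 2) ∧
      ‖⟪R, tens (φ α) (ψ β)⟫_ℂ‖ ^ 2 =
        C ^ 2 * ‖u α - u β‖ ^ 2 /
          ((1 + ‖u α‖ ^ 2) * (1 + C ^ 2 * ‖u β‖ ^ 2) * (1 + C ^ 2)) :=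
  canonical_rejection_probability_general C u φ ψ hφ hψ R hR K hK
end
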